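/- For (x,y,z) ∈ ℂ³ define the cubic g_{(x,y,z)}(a,b,c) = yz(y²−z²)·a³ + xz(z²−x²)·b³ + xy(x²−y²)·c³ + 3x²yz·a(b²−c²) − 3xy²z·b(a²−c²) + 3xyz²·c(a²−b²), regarded as a polynomial in the variables a, b, c. Then for every (x,y,z) ∈ ℂ³, the polynomial g_{(x,y,z)} and all of its partial derivatives of order ≤ 2 with respect to a, b, c vanish at the point (a,b,c) = (x,y,z); i.e. g_{(x,y,z)} has a triple point at Q = (x,y,z). -/
import Mathlib
set_option maxHeartbeats 2000000

open MvPolynomial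

/-- The BMSS-dual cubic g_{(x,y,z)} in the variables a, b, c (as X 0, X 1, X 2). -/
noncomputable def dualCubic (x y z : ℂ) : MvPolynomial (Fin 3) ℂ :=
  C (y * z * (y ^ 2 - z ^ 2)) * X 0 ^ 3
  + C (x * z * (z ^ 2 - x ^ 2)) * X 1 ^ 3
  + C (x * y * (x ^ 2 - y ^ 2)) * X 2 ^ 3
  + C (3 * x ^ 2 * y * z) * (X 0 * (X 1 ^ 2 - X 2 ^ 2))
  - C (3 * x * y ^ 2 * z) * (X 1 * (X 0 ^ 2 - X 2 ^ 2))
  + C (3 * x * y * z ^ 2) * (X 2 * (X 0 ^ 2 - X 1 ^ 2))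

lemma pderiv_two (i : Fin 3) :
    pderiv i (2 : MvPolynomial (Fin 3) ℂ) = 0 := by
  rw [← map_ofNat (C : ℂ →+* MvPolynomial (Fin 3) ℂ) 2, pderiv_C]

lemma pderiv_three (i : Fin 3) :
    pderiv i (3 : MvPolynomial (Fin 3) ℂ) = 0 := by
  rw [← map_ofNat (C : ℂ →+* MvPolynomial (Fin 3) ℂ) 3, pderiv_C]

/-- For every (x,y,z) ∈ ℂ³ the cubic g_{(x,y,z)}(a,b,c) and all of its partial
derivatives of order ≤ 2 with respect to a, b, c vanish at (a,b,c) = (x,y,z);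
i.e. g_{(x,y,z)} has a triple point at Q = (x,y,z). -/
theorem dual_cubic_triple_point (x y z : ℂ) :
    eval ![x, y, z] (dualCubic x y z) = 0 ∧
    (∀ i : Fin 3, eval ![x, y, z] (pderiv i (dualCubic x y z)) = 0) ∧
    (∀ i j : Fin 3, eval ![x, y, z] (pderiv i (pderiv j (dualCubic x y z))) = 0) := by
  refine ⟨?_, ?_, ?_⟩
  · simp [dualCubic]; ring
  · intro i
    fin_cases i <;>
      simp [dualCubic, pderiv_mul, pderiv_X, pderiv_two, pderiv_three, Pi.single_apply] <;> ring
  · intro i j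
    fin_cases i <;> fin_cases j <;>
      simp [dualCubic, pderiv_mul, pderiv_X, pderiv_two, pderiv_three, Pi.single_apply] <;> ring
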